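/- arXiv:2302.03608 — 3 statements merged into one kernel-verified Lean document; each statement's English description precedes it below -/
import Mathlib

section
/- For each natural number v ≥ 1 define f_v : ℕ → ℕ by f_v(x) = max(x − v, 0). Then no two-element subset of ℕ is Natarajan-shattered by this family: for all natural numbers a < b, there do not exist functions g₀, g₁ : {a, b} → ℕ with g₀(a) ≠ g₁(a) and g₀(b) ≠ g₁(b) such that for every subset B ⊆ {a, b} there is some v ≥ 1 with f_v(x) = g₀(x) for all x ∈ B and f_v(x) = g₁(x) for all x ∈ {a, b} \ B. -/
/-- The family of hinge functions `f_v x = max (x - v) 0` (here truncated natural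
subtraction `x - v`), for `v ≥ 1`, Natarajan-shatters no two-element subset of `ℕ`. -/
theorem stmt_4 :
    ∀ a b : ℕ, a < b →
      ¬ ∃ g₀ g₁ : ℕ → ℕ,
          g₀ a ≠ g₁ a ∧ g₀ b ≠ g₁ b ∧
          ∀ B ⊆ ({a, b} : Finset ℕ), ∃ v, 1 ≤ v ∧
            (∀ x ∈ B, x - v = g₀ x) ∧
            (∀ x ∈ ({a, b} : Finset ℕ) \ B, x - v = g₁ x) := by
  rintro a b hab ⟨g₀, g₁, ha, hb, h⟩
  have hne : a ≠ b := hab.ne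
  obtain ⟨v₁, hv₁, hB₁, hC₁⟩ := h {a} (by simp)
  obtain ⟨v₂, hv₂, hB₂, hC₂⟩ := h {b} (by simp)
  obtain ⟨v₃, hv₃, hB₃, _⟩ := h {a, b} le_rfl
  obtain ⟨v₄, hv₄, _, hC₄⟩ := h ∅ (by simp)
  have e1 : a - v₁ = g₀ a := hB₁ a (by simp)
  have e2 : b - v₁ = g₁ b := hC₁ b (by simp [Finset.mem_sdiff, hne.symm])
  have e3 : b - v₂ = g₀ b := hB₂ b (by simp)
  have e4 : a - v₂ = g₁ a := hC₂ a (by simp [Finset.mem_sdiff, hne])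
  have e5 : a - v₃ = g₀ a := hB₃ a (by simp)
  have e6 : b - v₃ = g₀ b := hB₃ b (by simp)
  have e7 : a - v₄ = g₁ a := hC₄ a (by simp)
  have e8 : b - v₄ = g₁ b := hC₄ b (by simp)
  omega
end

section
/- Let p ≥ 2 be a real number. Then for every integer h ≥ 1, (∑_{j=h+1}^∞ j^{−p}) · ∏_{j=2}^{h} (1 + j^{−p} / (j^{p−1} · ∑_{i=j}^∞ i^{−p})) ≤ e. -/
/-!
The tail `∑_{k > h} k^{-p}` is at most `∑_{k > h} 1/((k-1)k) = 1/h`, since `p ≥ 2`. Each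
factor of the product is at most `1 + 1/j`: the tail from `j` contains its first term `j^{-p}`,
and `j^{1-p} ≤ j^{-1}`. The product of the `1 + 1/j = (j+1)/j` telescopes to `(h+1)/2`, so the
whole expression is at most `(h+1)/(2h) ≤ 1 < e`.
-/

open Finset

/-- The paper's tail sum `Γ(m)` for the discount factor `γ(i) = i^{-p}`. -/
noncomputable def rpowTail (p : ℝ) (m : ℕ) : ℝ := ∑' i : ℕ, ((m + i : ℕ) : ℝ) ^ (-p)

lemma summable_rpowTail (p : ℝ) (hp : 1 < p) (m : ℕ) :
    Summable (fun i : ℕ => ((m + i : ℕ) : ℝ) ^ (-p)) := by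
  have h := (summable_nat_add_iff m).2 (Real.summable_nat_rpow.2 (by linarith : -p < -1))
  exact h.congr fun i => by rw [add_comm]

lemma rpow_neg_le_rpowTail (p : ℝ) (hp : 1 < p) (m : ℕ) :
    (m : ℝ) ^ (-p) ≤ rpowTail p m := by
  simpa [rpowTail] using (summable_rpowTail p hp m).le_tsum 0 fun i _ => by positivity

lemma rpowTail_pos (p : ℝ) (hp : 1 < p) {m : ℕ} (hm : 0 < m) : 0 < rpowTail p m :=
  (Real.rpow_pos_of_pos (by exact_mod_cast hm) _).trans_le (rpow_neg_le_rpowTail p hp m)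

lemma rpow_neg_add_one_le_inv_sub_inv (p : ℝ) (hp : 2 ≤ p) {a : ℝ} (ha : 0 < a) :
    (a + 1) ^ (-p) ≤ a⁻¹ - (a + 1)⁻¹ :=
  calc (a + 1) ^ (-p) ≤ (a + 1) ^ (-2 : ℝ) :=
        Real.rpow_le_rpow_of_exponent_le (by linarith) (by linarith)
    _ = ((a + 1) * (a + 1))⁻¹ := by
        rw [Real.rpow_neg (by linarith), Real.rpow_two, sq]
    _ ≤ (a * (a + 1))⁻¹ := by gcongr; linarith
    _ = a⁻¹ - (a + 1)⁻¹ := by field_simp; ring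

lemma rpowTail_succ_le_inv (p : ℝ) (hp : 2 ≤ p) {m : ℕ} (hm : 0 < m) :
    rpowTail p (m + 1) ≤ (m : ℝ)⁻¹ := by
  refine Real.tsum_le_of_sum_range_le (fun _ => by positivity) fun n => ?_
  have hterm (k : ℕ) :
      ((m + 1 + k : ℕ) : ℝ) ^ (-p)
        ≤ ((m + k : ℕ) : ℝ)⁻¹ - ((m + (k + 1) : ℕ) : ℝ)⁻¹ := by
    rw [show ((m + 1 + k : ℕ) : ℝ) = ((m + k : ℕ) : ℝ) + 1 by push_cast; ring,
      show ((m + (k + 1) : ℕ) : ℝ) = ((m + k : ℕ) : ℝ) + 1 by push_cast; ring]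
    exact rpow_neg_add_one_le_inv_sub_inv p hp (by positivity)
  calc ∑ k ∈ range n, ((m + 1 + k : ℕ) : ℝ) ^ (-p)
      ≤ ∑ k ∈ range n, (((m + k : ℕ) : ℝ)⁻¹ - ((m + (k + 1) : ℕ) : ℝ)⁻¹) :=
        sum_le_sum fun k _ => hterm k
    _ = (m : ℝ)⁻¹ - ((m + n : ℕ) : ℝ)⁻¹ := by
        simpa using sum_range_sub' (fun k => ((m + k : ℕ) : ℝ)⁻¹) n
    _ ≤ (m : ℝ)⁻¹ := by simp only [sub_le_self_iff, inv_nonneg, Nat.cast_nonneg]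

lemma rpow_neg_div_rpow_mul_rpowTail_le_inv (p : ℝ) (hp : 2 ≤ p) {j : ℕ} (hj : 0 < j) :
    (j : ℝ) ^ (-p) / ((j : ℝ) ^ (p - 1) * rpowTail p j) ≤ (j : ℝ)⁻¹ := by
  have hj0 : (0 : ℝ) < j := by exact_mod_cast hj
  have hj1 : (1 : ℝ) ≤ j := by exact_mod_cast hj
  have hfirst := rpow_neg_le_rpowTail p (by linarith) j
  have htail := rpowTail_pos p (by linarith) hj
  have hden : (j : ℝ) ^ (-1 : ℝ) ≤ (j : ℝ) ^ (p - 1) * rpowTail p j :=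
    calc (j : ℝ) ^ (-1 : ℝ) = (j : ℝ) ^ (p - 1) * (j : ℝ) ^ (-p) := by
          rw [← Real.rpow_add hj0]; ring_nf
      _ ≤ (j : ℝ) ^ (p - 1) * rpowTail p j := by gcongr
  have hnum : (j : ℝ) * (j : ℝ) ^ (-p) ≤ (j : ℝ) ^ (-1 : ℝ) :=
    calc (j : ℝ) * (j : ℝ) ^ (-p) = (j : ℝ) ^ (1 - p) := by
          rw [Real.rpow_sub hj0, Real.rpow_one, Real.rpow_neg hj0.le, div_eq_mul_inv]
      _ ≤ (j : ℝ) ^ (-1 : ℝ) := Real.rpow_le_rpow_of_exponent_le hj1 (by linarith)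
  rw [div_le_iff₀ (by positivity), ← div_eq_inv_mul, le_div_iff₀ hj0]
  linarith

lemma prod_Icc_two_one_add_inv {n : ℕ} (hn : 1 ≤ n) :
    ∏ j ∈ Icc 2 n, (1 + (j : ℝ)⁻¹) = ((n : ℝ) + 1) / 2 := by
  induction n, hn using Nat.le_induction with
  | base => norm_num
  | succ n hn ih =>
    rw [prod_Icc_succ_top (by omega), ih]
    push_cast
    field_simp

lemma prod_Icc_two_one_add_rpow_neg_div_le (p : ℝ) (hp : 2 ≤ p) {n : ℕ} (hn : 1 ≤ n) :
    ∏ j ∈ Icc 2 n, (1 + (j : ℝ) ^ (-p) / ((j : ℝ) ^ (p - 1) * rpowTail p j))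
      ≤ ((n : ℝ) + 1) / 2 := by
  rw [← prod_Icc_two_one_add_inv hn]
  refine prod_le_prod (fun j hj => ?_) fun j hj => ?_
  · have := rpowTail_pos p (by linarith) (m := j) (by have := (mem_Icc.1 hj).1; omega)
    positivity
  · have := rpow_neg_div_rpow_mul_rpowTail_le_inv p hp (j := j)
      (by have := (mem_Icc.1 hj).1; omega)
    linarith

/-- For `p ≥ 2` and `h ≥ 1`,
`(∑_{j=h+1}^∞ j^{−p}) · ∏_{j=2}^{h} (1 + j^{−p}/(j^{p−1}·∑_{i=j}^∞ i^{−p})) ≤ e`. -/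
theorem stmt_9 (p : ℝ) (hp : 2 ≤ p) (h : ℕ) (hh : 1 ≤ h) :
    (∑' k : ℕ, ((h + 1 + k : ℕ) : ℝ) ^ (-p)) *
      ∏ j ∈ Finset.Icc 2 h,
        (1 + (j : ℝ) ^ (-p) / ((j : ℝ) ^ (p - 1) * ∑' i : ℕ, ((j + i : ℕ) : ℝ) ^ (-p)))
      ≤ Real.exp 1 := by
  have hh' : (1 : ℝ) ≤ h := by exact_mod_cast hh
  calc _ ≤ (h : ℝ)⁻¹ * (((h : ℝ) + 1) / 2) :=
        mul_le_mul_of_nonneg (rpowTail_succ_le_inv p hp hh)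
          (prod_Icc_two_one_add_rpow_neg_div_le p hp hh)
          (rpowTail_pos p (by linarith) h.succ_pos).le (by positivity)
    _ ≤ 1 := by
        rw [inv_mul_le_iff₀ (by positivity)]
        linarith
    _ ≤ Real.exp 1 := by linarith [Real.add_one_le_exp (1 : ℝ)]
end

section
/- Let p > 1 be a real number. Then for every integer h ≥ 1, (∑_{j=h+1}^∞ j^{−p}) · ∏_{j=2}^{h} (1 + j^{−p} / (j^{p−1} · ∑_{i=j}^∞ i^{−p})) ≤ e · p/(p−1). -/
/-! By the mean value theorem, `(p - 1) (a + 1)^(-p) ≤ a^(1-p) - (a + 1)^(1-p) ≤ (p - 1) a^(-p)`,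
and the middle terms telescope. Hence the tail `Γ(a) = ∑_{k ≥ 0} (a + k)^(-p)` satisfies
`a^(1-p)/(p-1) ≤ Γ(a) ≤ a^(-p) + a^(1-p)/(p-1)`. The lower bound makes each factor of the product
at most `1 + (p - 1) j^(-p) ≤ exp ((p - 1) j^(-p))`, and the upper bound at `a = 1` gives
`∑_{j ≥ 2} j^(-p) ≤ 1/(p-1)`, so the product is at most `e`. The upper bound at `a = h + 1`
gives `Γ(h + 1) ≤ 1 + 1/(p-1) = p/(p-1)`. -/

open Real Filter Finset

theorem Antitone.hasSum_sub_succ {f : ℕ → ℝ} {l : ℝ} (hf : Antitone f)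
    (hl : Tendsto f atTop (nhds l)) : HasSum (fun n => f n - f (n + 1)) (f 0 - l) := by
  rw [hasSum_iff_tendsto_nat_of_nonneg fun n => sub_nonneg.2 (hf n.le_succ)]
  simp only [sum_range_sub']
  exact tendsto_const_nhds.sub hl

section RpowTail

variable {p a : ℝ}

theorem exists_rpow_one_sub_sub_eq (ha : 0 < a) :
    ∃ c ∈ Set.Ioo a (a + 1), a ^ (1 - p) - (a + 1) ^ (1 - p) = (p - 1) * c ^ (-p) := by
  have hcont : ContinuousOn (fun x : ℝ => x ^ (1 - p)) (Set.Icc a (a + 1)) :=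
    continuousOn_id.rpow_const fun x hx => Or.inl (ha.trans_le hx.1).ne'
  obtain ⟨c, hc, hslope⟩ := exists_hasDerivAt_eq_slope (fun x : ℝ => x ^ (1 - p))
    (fun x => (1 - p) * x ^ (-p)) (lt_add_one a) hcont fun x hx => by
      simpa only [sub_sub_cancel_left] using
        hasDerivAt_rpow_const (p := 1 - p) (Or.inl (ha.trans hx.1).ne')
  refine ⟨c, hc, ?_⟩
  rw [add_sub_cancel_left, div_one] at hslope
  linarith

theorem mul_add_one_rpow_neg_le_rpow_one_sub_sub (hp : 1 ≤ p) (ha : 0 < a) :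
    (p - 1) * (a + 1) ^ (-p) ≤ a ^ (1 - p) - (a + 1) ^ (1 - p) := by
  obtain ⟨c, hc, hc_eq⟩ := exists_rpow_one_sub_sub_eq (p := p) ha
  rw [hc_eq]
  exact mul_le_mul_of_nonneg_left
    (rpow_le_rpow_of_nonpos (ha.trans hc.1) hc.2.le (by linarith)) (by linarith)

theorem rpow_one_sub_sub_le_mul_rpow_neg (hp : 1 ≤ p) (ha : 0 < a) :
    a ^ (1 - p) - (a + 1) ^ (1 - p) ≤ (p - 1) * a ^ (-p) := by
  obtain ⟨c, hc, hc_eq⟩ := exists_rpow_one_sub_sub_eq (p := p) ha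
  rw [hc_eq]
  exact mul_le_mul_of_nonneg_left (rpow_le_rpow_of_nonpos ha hc.1.le (by linarith)) (by linarith)

theorem hasSum_rpow_one_sub_sub (hp : 1 < p) (ha : 0 < a) :
    HasSum (fun k : ℕ => (a + k) ^ (1 - p) - (a + k + 1) ^ (1 - p)) (a ^ (1 - p)) := by
  have hanti : Antitone fun k : ℕ => (a + k) ^ (1 - p) := fun m n hmn =>
    rpow_le_rpow_of_nonpos (by positivity) (by gcongr) (by linarith)
  have hlim : Tendsto (fun k : ℕ => (a + k) ^ (1 - p)) atTop (nhds 0) := by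
    simpa only [neg_sub, Function.comp_def] using (tendsto_rpow_neg_atTop (sub_pos.2 hp)).comp
      (tendsto_atTop_add_const_left atTop a tendsto_natCast_atTop_atTop)
  simpa [add_assoc] using hanti.hasSum_sub_succ hlim

theorem summable_add_nat_rpow_neg (hp : 1 < p) (ha : 0 < a) :
    Summable fun k : ℕ => (a + k) ^ (-p) :=
  ((summable_one_div_nat_add_rpow a p).2 hp).congr fun k => by
    rw [abs_of_pos (by positivity), rpow_neg (by positivity), one_div, add_comm]

theorem rpow_one_sub_div_le_tsum (hp : 1 < p) (ha : 0 < a) :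
    a ^ (1 - p) / (p - 1) ≤ ∑' k : ℕ, (a + k) ^ (-p) := by
  have htel := hasSum_rpow_one_sub_sub hp ha
  rw [div_le_iff₀ (sub_pos.2 hp), ← htel.tsum_eq, ← tsum_mul_right]
  refine htel.summable.tsum_le_tsum (fun k => ?_) ((summable_add_nat_rpow_neg hp ha).mul_right _)
  rw [mul_comm]
  exact rpow_one_sub_sub_le_mul_rpow_neg hp.le (by positivity)

theorem tsum_add_one_le_rpow_one_sub_div (hp : 1 < p) (ha : 0 < a) :
    ∑' k : ℕ, (a + 1 + k) ^ (-p) ≤ a ^ (1 - p) / (p - 1) := by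
  have htel := hasSum_rpow_one_sub_sub hp ha
  rw [le_div_iff₀ (sub_pos.2 hp), ← htel.tsum_eq, ← tsum_mul_right]
  refine ((summable_add_nat_rpow_neg hp (by linarith)).mul_right _).tsum_le_tsum (fun k => ?_)
    htel.summable
  rw [mul_comm, add_right_comm]
  exact mul_add_one_rpow_neg_le_rpow_one_sub_sub hp.le (by positivity)

theorem tsum_le_rpow_neg_add_rpow_one_sub_div (hp : 1 < p) (ha : 0 < a) :
    ∑' k : ℕ, (a + k) ^ (-p) ≤ a ^ (-p) + a ^ (1 - p) / (p - 1) := by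
  rw [(summable_add_nat_rpow_neg hp ha).tsum_eq_zero_add]
  simpa only [Nat.cast_add_one, ← add_assoc, add_right_comm _ _ (1 : ℝ), add_le_add_iff_left,
    CharP.cast_eq_zero, add_zero] using tsum_add_one_le_rpow_one_sub_div hp ha

theorem one_add_rpow_neg_div_le_exp (hp : 1 < p) (ha : 0 < a) :
    1 + a ^ (-p) / (a ^ (p - 1) * ∑' k : ℕ, (a + k) ^ (-p)) ≤ exp ((p - 1) * a ^ (-p)) := by
  have hp1 : 0 < p - 1 := sub_pos.2 hp
  have hlower : 1 / (p - 1) ≤ a ^ (p - 1) * ∑' k : ℕ, (a + k) ^ (-p) :=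
    calc 1 / (p - 1) = a ^ (p - 1) * (a ^ (1 - p) / (p - 1)) := by
          rw [mul_div_assoc', ← rpow_add ha, sub_add_sub_cancel', sub_self, rpow_zero]
      _ ≤ _ := by gcongr; exact rpow_one_sub_div_le_tsum hp ha
  calc _ ≤ 1 + a ^ (-p) / (1 / (p - 1)) := by gcongr
    _ = 1 + (p - 1) * a ^ (-p) := by rw [div_div_eq_mul_div, div_one, mul_comm]
    _ ≤ _ := by linarith [add_one_le_exp ((p - 1) * a ^ (-p))]

end RpowTail

theorem sum_Icc_two_rpow_neg_le {p : ℝ} (hp : 1 < p) (n : ℕ) :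
    ∑ j ∈ Icc 2 n, (j : ℝ) ^ (-p) ≤ 1 / (p - 1) := by
  have htail := tsum_add_one_le_rpow_one_sub_div hp one_pos
  rw [one_rpow] at htail
  refine le_trans ?_ htail
  rw [← Ico_add_one_right_eq_Icc, sum_Ico_eq_sum_range]
  convert (summable_add_nat_rpow_neg hp (a := 1 + 1) (by norm_num)).sum_le_tsum
    (range (n + 1 - 2)) (fun k _ => by positivity) using 2
  push_cast
  norm_num

theorem stmt_10_general (p : ℝ) (hp : 1 < p) (h : ℕ) :
    (∑' k : ℕ, ((h + 1 + k : ℕ) : ℝ) ^ (-p)) *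
      ∏ j ∈ Finset.Icc 2 h,
        (1 + (j : ℝ) ^ (-p) / ((j : ℝ) ^ (p - 1) * ∑' i : ℕ, ((j + i : ℕ) : ℝ) ^ (-p)))
      ≤ Real.exp 1 * p / (p - 1) := by
  have hp1 : 0 < p - 1 := sub_pos.2 hp
  have hh1 : (1 : ℝ) ≤ h + 1 := by simp
  have htail : ∑' k : ℕ, ((h + 1 + k : ℕ) : ℝ) ^ (-p) ≤ p / (p - 1) := by
    push_cast
    calc _ ≤ ((h : ℝ) + 1) ^ (-p) + ((h : ℝ) + 1) ^ (1 - p) / (p - 1) :=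
          tsum_le_rpow_neg_add_rpow_one_sub_div hp (by positivity)
      _ ≤ 1 + 1 / (p - 1) := by
          gcongr <;> exact rpow_le_one_of_one_le_of_nonpos hh1 (by linarith)
      _ = p / (p - 1) := by field_simp; ring
  have hprod : ∏ j ∈ Icc 2 h,
      (1 + (j : ℝ) ^ (-p) / ((j : ℝ) ^ (p - 1) * ∑' i : ℕ, ((j + i : ℕ) : ℝ) ^ (-p)))
        ≤ exp 1 :=
    calc _ ≤ ∏ j ∈ Icc 2 h, exp ((p - 1) * (j : ℝ) ^ (-p)) := by
          refine prod_le_prod (fun j _ => by positivity) fun j hj => ?_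
          push_cast
          exact one_add_rpow_neg_div_le_exp hp
            (Nat.cast_pos.2 (zero_lt_two.trans_le (mem_Icc.1 hj).1))
      _ = exp ((p - 1) * ∑ j ∈ Icc 2 h, (j : ℝ) ^ (-p)) := by rw [← exp_sum, mul_sum]
      _ ≤ exp 1 := by
          rw [exp_le_exp, ← le_div_iff₀' hp1]
          exact sum_Icc_two_rpow_neg_le hp h
  calc _ ≤ p / (p - 1) * exp 1 :=
        mul_le_mul htail hprod (prod_nonneg fun j _ => by positivity) (by positivity)
    _ = _ := by ring

/-- For `p > 1` and `h ≥ 1`,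
`(∑_{j=h+1}^∞ j^{−p}) · ∏_{j=2}^{h} (1 + j^{−p}/(j^{p−1}·∑_{i=j}^∞ i^{−p})) ≤ e·p/(p−1)`. -/
theorem stmt_10 (p : ℝ) (hp : 1 < p) (h : ℕ) (hh : 1 ≤ h) :
    (∑' k : ℕ, ((h + 1 + k : ℕ) : ℝ) ^ (-p)) *
      ∏ j ∈ Finset.Icc 2 h,
        (1 + (j : ℝ) ^ (-p) / ((j : ℝ) ^ (p - 1) * ∑' i : ℕ, ((j + i : ℕ) : ℝ) ^ (-p)))
      ≤ Real.exp 1 * p / (p - 1) :=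
  stmt_10_general p hp h
end
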